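/- If λ is a complex number with Re λ > θ, where θ = -ν/2 when 4n²π²κ - ν² ≥ 0 for all n ≥ 1, and θ = max over n with 4n²π²κ - ν² < 0 of (-ν/2 + √(ν² - 4n²π²κ)/2) otherwise, then -λ(λ+ν) is not an eigenvalue of the operator -κ d²/dx² on (-1,1) with Dirichlet boundary conditions, i.e., -λ(λ+ν) ≠ κn²π² for all positive integers n. -/

import Mathlib

open Real Complex Classical

/-! Writing `z = 2λ + ν`, the equation `-λ(λ + ν) = κn²π²` becomes `z² = ν² - 4κn²π²`, a real number.
A complex square root of a real number `r` is either real, hence `±√r`, or purely imaginary, so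
`Re z ≤ √r` in all cases (with `√r = 0` for `r < 0`). Hence `Re λ ≤ -ν/2 + √(ν² - 4n²π²κ)/2`, and the
right-hand side is at most `θ`: when `4n²π²κ - ν² ≥ 0` it equals `-ν/2`, which lies below every element
of the set whose supremum is taken. -/

theorem Complex.re_le_sqrt_of_sq_eq_ofReal {z : ℂ} {r : ℝ} (h : z ^ 2 = r) : z.re ≤ √r := by
  have hre : z.re ^ 2 - z.im ^ 2 = r := by simpa [sq] using congrArg Complex.re h
  have him : z.re * z.im = 0 := by
    have := congrArg Complex.im h
    simp only [sq, Complex.mul_im, Complex.ofReal_im] at this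
    linarith
  rcases mul_eq_zero.mp him with hre0 | him0
  · rw [hre0]
    exact Real.sqrt_nonneg r
  · calc z.re ≤ |z.re| := le_abs_self _
      _ = √(z.re ^ 2) := (Real.sqrt_sq_eq_abs _).symm
      _ = √r := by rw [← hre, him0]; ring_nf

theorem re_le_of_neg_mul_add_eq {l : ℂ} {ν c : ℝ} (h : -l * (l + ν) = c) :
    l.re ≤ -ν / 2 + √(ν ^ 2 - 4 * c) / 2 := by
  have hsq : (2 * l + ν) ^ 2 = ((ν ^ 2 - 4 * c : ℝ) : ℂ) := by
    push_cast
    linear_combination -4 * h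
  have := Complex.re_le_sqrt_of_sq_eq_ofReal hsq
  simp only [Complex.add_re, Complex.mul_re, Complex.ofReal_re, Complex.re_ofNat,
    Complex.im_ofNat, zero_mul, sub_zero] at this
  linarith

theorem root_le_ite {d : ℕ → ℝ} (hd : ∀ n, 0 ≤ d n) (ν : ℝ) {n : ℕ} (hn : 1 ≤ n) :
    -ν / 2 + √(ν ^ 2 - d n) / 2 ≤
      if ∀ n : ℕ, 1 ≤ n → 0 ≤ d n - ν ^ 2 then -ν / 2
      else sSup {x : ℝ | ∃ n : ℕ, 1 ≤ n ∧ d n - ν ^ 2 < 0 ∧ x = -ν / 2 + √(ν ^ 2 - d n) / 2} := by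
  split_ifs with hall
  · rw [Real.sqrt_eq_zero'.mpr (by linarith [hall n hn])]
    simp
  · set S := {x : ℝ | ∃ n : ℕ, 1 ≤ n ∧ d n - ν ^ 2 < 0 ∧ x = -ν / 2 + √(ν ^ 2 - d n) / 2}
    have hbdd : BddAbove S := by
      refine ⟨-ν / 2 + |ν| / 2, ?_⟩
      rintro x ⟨m, -, -, rfl⟩
      have : √(ν ^ 2 - d m) ≤ |ν| := by
        rw [← Real.sqrt_sq_eq_abs]
        exact Real.sqrt_le_sqrt (by linarith [hd m])
      linarith
    by_cases hdn : d n - ν ^ 2 < 0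
    · exact le_csSup hbdd ⟨n, hn, hdn, rfl⟩
    · push Not at hall
      obtain ⟨m, hm, hdm⟩ := hall
      rw [Real.sqrt_eq_zero'.mpr (by linarith)]
      calc -ν / 2 + 0 / 2 ≤ -ν / 2 + √(ν ^ 2 - d m) / 2 := by
            linarith [Real.sqrt_nonneg (ν ^ 2 - d m)]
        _ ≤ sSup S := le_csSup hbdd ⟨m, hm, hdm, rfl⟩

theorem resolvent_avoids_eigenvalues_general
    (κ ν θ : ℝ) (hκ : 0 < κ)
    (hθ : θ = if ∀ n : ℕ, 1 ≤ n → 0 ≤ 4 * (n:ℝ)^2 * π^2 * κ - ν^2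
        then -ν/2
        else sSup {x : ℝ | ∃ n : ℕ, 1 ≤ n ∧ 4 * (n:ℝ)^2 * π^2 * κ - ν^2 < 0 ∧
              x = -ν/2 + Real.sqrt (ν^2 - 4 * (n:ℝ)^2 * π^2 * κ) / 2})
    (l : ℂ) (hl : θ < l.re) :
    ∀ n : ℕ, 1 ≤ n → -l * (l + (ν:ℂ)) ≠ ((κ * (n:ℝ)^2 * π^2 : ℝ) : ℂ) := by
  intro n hn heq
  have hroot := re_le_of_neg_mul_add_eq heq
  have hθn : -ν / 2 + √(ν ^ 2 - 4 * (n:ℝ) ^ 2 * π ^ 2 * κ) / 2 ≤ θ :=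
    hθ ▸ root_le_ite (d := fun n : ℕ => 4 * (n:ℝ) ^ 2 * π ^ 2 * κ) (fun _ => by positivity) ν hn
  rw [show 4 * (κ * (n:ℝ) ^ 2 * π ^ 2) = 4 * (n:ℝ) ^ 2 * π ^ 2 * κ by ring] at hroot
  linarith

/-- If Re λ > θ (with θ given by the dichotomy of Proposition 2.1(1)),
then -λ(λ+ν) avoids the Dirichlet eigenvalues κn²π². -/
theorem resolvent_avoids_eigenvalues
    (κ ν θ : ℝ) (hκ : 0 < κ) (hν : 0 < ν)
    (hθ : θ = if ∀ n : ℕ, 1 ≤ n → 0 ≤ 4 * (n:ℝ)^2 * π^2 * κ - ν^2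
        then -ν/2
        else sSup {x : ℝ | ∃ n : ℕ, 1 ≤ n ∧ 4 * (n:ℝ)^2 * π^2 * κ - ν^2 < 0 ∧
              x = -ν/2 + Real.sqrt (ν^2 - 4 * (n:ℝ)^2 * π^2 * κ) / 2})
    (l : ℂ) (hl : θ < l.re) :
    ∀ n : ℕ, 1 ≤ n → -l * (l + (ν:ℂ)) ≠ ((κ * (n:ℝ)^2 * π^2 : ℝ) : ℂ) :=
  resolvent_avoids_eigenvalues_general κ ν θ hκ hθ l hl
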